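/- For every n ≥ 1 and every k ∈ {1, …, n}, the vector p^{(k)} ∈ ℝ^n with entries p^{(k)}_j = sqrt(2/(n + 1/2)) · cos((2π/(2n+1))(k - 1/2)(j - 1/2)) is an eigenvector of the matrix M_n = C_n^{-1}(C_n^{-1})^T with eigenvalue d_k = 2[1 - cos(π(2k-1)/(2n+1))], where C_n is the n×n lower triangular matrix of ones. -/

import Mathlib

open Matrix Real

lemma aux_sum {n : ℕ} (f : Fin n → ℝ) (m : ℕ) :
    (∑ j : Fin n, if (j:ℕ) = m then f j else 0) = if h : m < n then f ⟨m, h⟩ else 0 := by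
  split
  · next h =>
    rw [Finset.sum_eq_single (⟨m, h⟩ : Fin n)]
    · simp
    · intro b _ hb; exact if_neg (by simpa [Fin.ext_iff] using hb)
    · simp
  · next h => exact Finset.sum_eq_zero fun j _ => if_neg (by omega)

lemma row_sum {n : ℕ} (q : Fin n → ℝ) (i : Fin n) :
    (∑ l : Fin n, ((if i = l then (1:ℝ) else 0) - if (i:ℕ) = (l:ℕ)+1 then 1 else 0) * q l)
      = q i - (if h : 1 ≤ (i:ℕ) then q ⟨(i:ℕ)-1, by omega⟩ else 0) := by
  have hval : ∀ l : Fin n, (if i = l then (1:ℝ) else 0) = if (i:ℕ) = (l:ℕ) then 1 else 0 := by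
    intro l; simp [Fin.ext_iff]
  rcases Nat.lt_or_ge (i:ℕ) 1 with h0 | h1
  · rw [dif_neg (by omega)]
    have hsplit : ∀ l : Fin n,
        ((if i = l then (1:ℝ) else 0) - if (i:ℕ) = (l:ℕ)+1 then 1 else 0) * q l
        = (if (l:ℕ) = (i:ℕ) then q l else 0) := by
      intro l; rw [hval l]; split_ifs <;> first | ring1 | omega | (exfalso; omega)
    rw [Finset.sum_congr rfl fun l _ => hsplit l, aux_sum q (i:ℕ), dif_pos i.isLt]
    try simp
  · rw [dif_pos h1]
    have hsplit : ∀ l : Fin n,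
        ((if i = l then (1:ℝ) else 0) - if (i:ℕ) = (l:ℕ)+1 then 1 else 0) * q l
        = (if (l:ℕ) = (i:ℕ) then q l else 0) - (if (l:ℕ) = (i:ℕ)-1 then q l else 0) := by
      intro l; rw [hval l]; split_ifs <;> first | ring1 | omega | (exfalso; omega)
    rw [Finset.sum_congr rfl fun l _ => hsplit l, Finset.sum_sub_distrib,
      aux_sum q (i:ℕ), aux_sum q ((i:ℕ)-1), dif_pos i.isLt, dif_pos (show (i:ℕ)-1 < n by omega)]
    try simp

lemma trig_left (a c dd : ℝ) (hdd : dd = 2*(1 - Real.cos a)) :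
    c * Real.cos (a*(0+1/2)) - c * Real.cos (a*(1+1/2)) - 0
      = dd * (c * Real.cos (a*(0+1/2))) := by
  have hca := Real.cos_two_mul (a/2)
  have hsa := Real.sin_two_mul (a/2)
  rw [show 2*(a/2) = a by ring] at hca hsa
  rw [show a*((0:ℝ)+1/2) = a/2 by ring, show a*((1:ℝ)+1/2) = a/2 + a by ring,
    Real.cos_add, hdd, hca, hsa]
  linear_combination (2*c*Real.cos (a/2)) * Real.sin_sq_add_cos_sq (a/2)

lemma trig_interior (a c dd t : ℝ) (hdd : dd = 2*(1 - Real.cos a)) :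
    c * Real.cos (a*(t+1+1/2)) - c * Real.cos (a*(t+1+1+1/2))
      - (c * Real.cos (a*(t+1/2)) - c * Real.cos (a*(t+1+1/2)))
      = dd * (c * Real.cos (a*(t+1+1/2))) := by
  rw [show a*(t+1+1+1/2) = a*(t+1+1/2) + a by ring,
    show a*(t+1/2) = a*(t+1+1/2) - a by ring, Real.cos_add, Real.cos_sub, hdd]
  ring

lemma trig_right (a c dd t : ℝ) (hdd : dd = 2*(1 - Real.cos a))
    (hz : Real.cos (a*(t+1+1+1/2)) = 0) :
    c * Real.cos (a*(t+1+1/2)) - 0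
      - (c * Real.cos (a*(t+1/2)) - c * Real.cos (a*(t+1+1/2)))
      = dd * (c * Real.cos (a*(t+1+1/2))) := by
  rw [show a*(t+1+1+1/2) = a*(t+1+1/2) + a by ring, Real.cos_add] at hz
  rw [show a*(t+1/2) = a*(t+1+1/2) - a by ring, Real.cos_sub, hdd]
  linear_combination c * hz

/-- the vector `p^{(k)}` with entries
`p^{(k)}_j = sqrt(2/(n+1/2)) cos((2π/(2n+1))(k-1/2)(j-1/2))` is an eigenvector of
`M = C⁻¹ (C⁻¹)ᵀ` with eigenvalue `d_k = 2[1 - cos(π(2k-1)/(2n+1))]`, where `C` is the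
lower triangular matrix of ones. (Indices `k, j ∈ {1, …, n}` are represented by
`k, j : Fin n` via `k ↦ (k : ℕ) + 1`.) -/
theorem eigenvector_of_M (n : ℕ) (hn : 1 ≤ n)
    (C : Matrix (Fin n) (Fin n) ℝ) (hC : ∀ i j, C i j = if (j : ℕ) ≤ (i : ℕ) then 1 else 0)
    (k : Fin n) (p : Fin n → ℝ)
    (hp : ∀ j : Fin n, p j = Real.sqrt (2 / ((n : ℝ) + 1 / 2)) *
      Real.cos ((2 * π / (2 * (n : ℝ) + 1)) * (((k : ℕ) : ℝ) + 1 - 1 / 2) *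
        (((j : ℕ) : ℝ) + 1 - 1 / 2)))
    (d : ℝ) (hd : d = 2 * (1 - Real.cos (π * (2 * (((k : ℕ) : ℝ) + 1) - 1) / (2 * (n : ℝ) + 1)))) :
    (C⁻¹ * (C⁻¹)ᵀ).mulVec p = d • p := by
  have hn2 : (2*(n:ℝ)+1) ≠ 0 := by positivity
  set c := Real.sqrt (2 / ((n:ℝ) + 1/2)) with hc
  set a := 2*π/(2*(n:ℝ)+1) * (((k:ℕ):ℝ) + 1/2) with ha
  set g : ℕ → ℝ := fun m => c * Real.cos (a * ((m:ℝ) + 1/2)) with hg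
  have hpg : ∀ j : Fin n, p j = g (j:ℕ) := by
    intro j
    have harg : (2*π/(2*(n:ℝ)+1)) * (((k:ℕ):ℝ)+1-1/2) * (((j:ℕ):ℝ)+1-1/2)
        = a * (((j:ℕ):ℝ)+1/2) := by rw [ha]; ring
    rw [hp j, harg]
  have hda : d = 2 * (1 - Real.cos a) := by
    have hang : π * (2*(((k:ℕ):ℝ)+1)-1)/(2*(n:ℝ)+1) = a := by rw [ha]; ring
    rw [hd, hang]
  -- the explicit inverse of C
  set B := Matrix.of (fun i j : Fin n =>
    (if i = j then (1:ℝ) else 0) - (if (i:ℕ) = (j:ℕ)+1 then 1 else 0)) with hB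
  have hCinv : C⁻¹ = B := by
    apply Matrix.inv_eq_right_inv
    ext i j
    simp only [Matrix.mul_apply, hB, Matrix.of_apply, Matrix.one_apply]
    have hsplit : ∀ l : Fin n,
        C i l * ((if l = j then (1:ℝ) else 0) - (if (l:ℕ) = (j:ℕ)+1 then 1 else 0))
        = (if l = j then C i l else 0) - (if (l:ℕ) = (j:ℕ)+1 then C i l else 0) := by
      intro l; split_ifs <;> ring
    rw [Finset.sum_congr rfl fun l _ => hsplit l, Finset.sum_sub_distrib,
      Finset.sum_ite_eq' Finset.univ j (fun l => C i l), aux_sum (fun l => C i l) ((j:ℕ)+1)]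
    simp only [Finset.mem_univ, if_true, hC, Fin.ext_iff]
    split_ifs <;> first | omega | norm_num
  rw [hCinv]
  -- row action of Bᵀ
  have hq : ∀ i : Fin n, Bᵀ.mulVec p i
      = g (i:ℕ) - (if (i:ℕ)+1 < n then g ((i:ℕ)+1) else 0) := by
    intro i
    simp only [Matrix.mulVec, dotProduct, Matrix.transpose_apply, hB, Matrix.of_apply]
    have hsplit : ∀ l : Fin n,
        ((if l = i then (1:ℝ) else 0) - (if (l:ℕ) = (i:ℕ)+1 then 1 else 0)) * p l
        = (if l = i then p l else 0) - (if (l:ℕ) = (i:ℕ)+1 then p l else 0) := by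
      intro l; split_ifs <;> ring
    rw [Finset.sum_congr rfl fun l _ => hsplit l, Finset.sum_sub_distrib,
      Finset.sum_ite_eq' Finset.univ i p, aux_sum p ((i:ℕ)+1)]
    simp only [Finset.mem_univ, if_true, hpg]
    split <;> rfl
  -- row action of B
  have hBv : ∀ (v : Fin n → ℝ) (i : Fin n), B.mulVec v i
      = v i - (if h : 1 ≤ (i:ℕ) then v ⟨(i:ℕ)-1, by omega⟩ else 0) := by
    intro v i
    simp only [Matrix.mulVec, dotProduct, hB, Matrix.of_apply]
    exact row_sum v i
  funext i
  rw [← Matrix.mulVec_mulVec, hBv (Bᵀ.mulVec p) i]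
  simp only [hq, Pi.smul_apply, smul_eq_mul, hpg i]
  rcases Nat.lt_or_ge (i:ℕ) 1 with h0 | h1
  · -- first row
    rw [dif_neg (by omega)]
    have h0' : (i:ℕ) = 0 := by omega
    rw [h0']
    rcases eq_or_lt_of_le hn with hn1 | hn1
    · -- n = 1
      have hn1' : n = 1 := hn1.symm
      have hk : (k:ℕ) = 0 := by have := k.isLt; omega
      have hA : a = π/3 := by rw [ha, hk, hn1']; push_cast; ring
      have hd1 : d = 1 := by
        rw [hda, hA, Real.cos_pi_div_three]; norm_num
      rw [if_neg (by omega), hd1]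
      ring
    · -- n ≥ 2
      rw [if_pos (by omega), hg]
      have := trig_left a c d hda
      convert this using 3 <;> push_cast <;> ring
  · -- row i ≥ 1
    obtain ⟨mm, hmm⟩ : ∃ mm, (i:ℕ) = mm + 1 := ⟨(i:ℕ)-1, by omega⟩
    rw [dif_pos h1]
    simp only [hmm, Nat.add_sub_cancel]
    rw [if_pos (show mm + 1 < n by omega)]
    rcases Nat.lt_or_ge ((i:ℕ)+1) n with hlast | hlast
    · -- interior row
      rw [if_pos (by omega), hg]
      have := trig_interior a c d (mm:ℝ) hda
      convert this using 3 <;> push_cast <;> ring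
    · -- last row
      have hlast' : mm + 2 = n := by have := i.isLt; omega
      rw [if_neg (by omega), hg]
      have hz : Real.cos (a*((mm:ℝ)+1+1+1/2)) = 0 := by
        have hcast : (mm:ℝ)+1+1 = (n:ℝ) := by exact_mod_cast congrArg Nat.cast hlast'
        have harg : a*((mm:ℝ)+1+1+1/2) = ((k:ℕ):ℝ)*π + π/2 := by
          rw [ha, show ((mm:ℝ)+1+1+1/2) = (n:ℝ)+1/2 by rw [← hcast]]
          field_simp
        rw [harg, Real.cos_add_pi_div_two, Real.sin_nat_mul_pi, neg_zero]
      have := trig_right a c d (mm:ℝ) hda hz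
      convert this using 3 <;> push_cast <;> ring
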